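/- arXiv:math/9901135 — 3 statements merged into one kernel-verified Lean document; each statement's English description precedes it below -/
import Mathlib

section
/- The number of left factors of Dyck paths of length k (sequences of k up/down steps with all partial sums nonnegative) equals C(k, k/2) if k is even, and (1/2) * C(k+1, (k+1)/2) if k is odd. -/
/-- Number of up-steps (`true`) among the first `i` steps of `w`. -/
def ups {n : ℕ} (w : Fin n → Bool) (i : ℕ) : ℕ :=
  (Finset.univ.filter fun j : Fin n => (j : ℕ) < i ∧ w j = true).card

/-- Number of down-steps (`false`) among the first `i` steps of `w`. -/
def downs {n : ℕ} (w : Fin n → Bool) (i : ℕ) : ℕ :=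
  (Finset.univ.filter fun j : Fin n => (j : ℕ) < i ∧ w j = false).card

/-- A left factor of a Dyck path: every prefix has at least as many ups as downs. -/
def IsLeftFactor {n : ℕ} (w : Fin n → Bool) : Prop :=
  ∀ i ≤ n, downs w i ≤ ups w i

/-- A Dyck word: a left factor with equally many ups and downs overall. -/
def IsDyckWord {n : ℕ} (w : Fin n → Bool) : Prop :=
  IsLeftFactor w ∧ ups w n = downs w n

/-!
Appending a step to a left factor `w` of length `k` yields a left factor, except when the step
is down and `w` ends at height zero, i.e. `w` is a Dyck word. Hence `L (k + 1) = 2 L k - D k`,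
where `D k` counts Dyck words: `D (2m) = catalan m` (Mathlib's count of `DyckWord`s) and
`D (2m + 1) = 0`. Induction, using `C(2m+1, m) + catalan m = 2 C(2m, m)` and
`C(2m+2, m+1) = 2 C(2m+1, m)`, gives `L k = C(k, ⌊k/2⌋)`, which is the claim in both parities.
-/

open Finset

theorem card_filter_lt_and_eq_eq_count_take_ofFn {α : Type*} [DecidableEq α] {n : ℕ}
    (f : Fin n → α) (a : α) (i : ℕ) :
    #{j : Fin n | (j : ℕ) < i ∧ f j = a} = ((List.ofFn f).take i).count a := by
  induction n generalizing i with
  | zero => simp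
  | succ n ih =>
    cases i with
    | zero => simp
    | succ i =>
      rw [Fin.card_filter_univ_succ', List.ofFn_succ, List.take_succ_cons, List.count_cons]
      simp only [Fin.val_succ, Nat.add_lt_add_iff_right, ih]
      simp [add_comm, beq_iff_eq]

theorem card_filter_lt_and_snoc_eq {α : Type*} [DecidableEq α] {k : ℕ}
    (w : Fin k → α) (b a : α) (i : ℕ) :
    #{j : Fin (k + 1) | (j : ℕ) < i ∧ Fin.snoc (α := fun _ => α) w b j = a} =
      #{j : Fin k | (j : ℕ) < i ∧ w j = a} + if k < i ∧ b = a then 1 else 0 := by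
  simp only [card_filter_lt_and_eq_eq_count_take_ofFn, List.ofFn_succ', Fin.snoc_castSucc,
    Fin.snoc_last, List.concat_eq_append, List.take_append, List.length_ofFn, List.count_append]
  congr 1
  rcases Nat.lt_or_ge k i with h | h
  · obtain ⟨d, hd⟩ : ∃ d, i - k = d + 1 := ⟨i - k - 1, by omega⟩
    simp [hd, h, List.count_cons]
  · simp [Nat.sub_eq_zero_of_le h, Nat.not_lt.mpr h]

theorem card_filter_lt_and_eq_of_le {α : Type*} [DecidableEq α] {n : ℕ} (f : Fin n → α) (a : α)
    {i : ℕ} (h : n ≤ i) :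
    #{j : Fin n | (j : ℕ) < i ∧ f j = a} = #{j : Fin n | (j : ℕ) < n ∧ f j = a} := by
  congr 1
  exact filter_congr fun j _ => by simp [j.isLt, lt_of_lt_of_le j.isLt h]

theorem ups_of_le {n : ℕ} (w : Fin n → Bool) {i : ℕ} (h : n ≤ i) : ups w i = ups w n :=
  card_filter_lt_and_eq_of_le w true h

theorem downs_of_le {n : ℕ} (w : Fin n → Bool) {i : ℕ} (h : n ≤ i) : downs w i = downs w n :=
  card_filter_lt_and_eq_of_le w false h

theorem ups_snoc {k : ℕ} (w : Fin k → Bool) (b : Bool) (i : ℕ) :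
    ups (Fin.snoc w b) i = ups w i + if k < i ∧ b = true then 1 else 0 :=
  card_filter_lt_and_snoc_eq w b true i

theorem downs_snoc {k : ℕ} (w : Fin k → Bool) (b : Bool) (i : ℕ) :
    downs (Fin.snoc w b) i = downs w i + if k < i ∧ b = false then 1 else 0 :=
  card_filter_lt_and_snoc_eq w b false i

theorem isLeftFactor_snoc_iff {k : ℕ} (w : Fin k → Bool) (b : Bool) :
    IsLeftFactor (Fin.snoc w b) ↔ IsLeftFactor w ∧ (b = true ∨ ups w k ≠ downs w k) := by
  simp only [IsLeftFactor, ups_snoc, downs_snoc]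
  constructor
  · intro h
    have hw : ∀ i ≤ k, downs w i ≤ ups w i := fun i hi => by
      simpa [Nat.not_lt.mpr hi] using h i (by omega)
    refine ⟨hw, ?_⟩
    have := h (k + 1) le_rfl
    rw [ups_of_le w k.le_succ, downs_of_le w k.le_succ] at this
    cases b <;> simp at this ⊢
    omega
  · rintro ⟨hw, hb⟩ i hi
    rcases Nat.lt_or_ge k i with h | h
    · obtain rfl : i = k + 1 := by omega
      have := hw k le_rfl
      rw [ups_of_le w k.le_succ, downs_of_le w k.le_succ]
      cases b <;> simp at hb ⊢ <;> omega
    · simpa [Nat.not_lt.mpr h] using hw i h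

theorem card_isLeftFactor_succ_add_card_isDyckWord (k : ℕ) :
    Nat.card {w : Fin (k + 1) → Bool // IsLeftFactor w} +
        Nat.card {w : Fin k → Bool // IsDyckWord w} =
      2 * Nat.card {w : Fin k → Bool // IsLeftFactor w} := by
  classical
  let e : {p : Bool × (Fin k → Bool) // IsLeftFactor p.2 ∧ (p.1 = true ∨ ups p.2 k ≠ downs p.2 k)}
      ≃ {w : Fin (k + 1) → Bool // IsLeftFactor w} :=
    (Fin.snocEquiv fun _ => Bool).subtypeEquiv fun p => (isLeftFactor_snoc_iff p.2 p.1).symm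
  rw [← Nat.card_congr e]
  simp only [Nat.card_eq_fintype_card, Fintype.card_subtype, card_filter, Fintype.sum_prod_type,
    Fintype.sum_bool, IsDyckWord]
  rw [← sum_add_distrib, ← sum_add_distrib, mul_sum]
  refine sum_congr rfl fun w _ => ?_
  by_cases hw : IsLeftFactor w <;> by_cases hb : ups w k = downs w k <;> simp [hw, hb]

open DyckStep

def stepOfBool (b : Bool) : DyckStep := if b then U else D

theorem stepOfBool_injective : Function.Injective stepOfBool := by
  decide

def steps {n : ℕ} (w : Fin n → Bool) : List DyckStep := (List.ofFn w).map stepOfBool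

@[simp] theorem length_steps {n : ℕ} (w : Fin n → Bool) : (steps w).length = n := by
  simp [steps]

theorem count_U_take_steps {n : ℕ} (w : Fin n → Bool) (i : ℕ) :
    ((steps w).take i).count U = ups w i := by
  rw [ups, card_filter_lt_and_eq_eq_count_take_ofFn, steps, ← List.map_take,
    show U = stepOfBool true from rfl, List.count_map_of_injective _ _ stepOfBool_injective]

theorem count_D_take_steps {n : ℕ} (w : Fin n → Bool) (i : ℕ) :
    ((steps w).take i).count D = downs w i := by
  rw [downs, card_filter_lt_and_eq_eq_count_take_ofFn, steps, ← List.map_take,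
    show D = stepOfBool false from rfl, List.count_map_of_injective _ _ stepOfBool_injective]

theorem isDyckWord_iff_steps {n : ℕ} (w : Fin n → Bool) :
    IsDyckWord w ↔ (steps w).count U = (steps w).count D ∧
      ∀ i, ((steps w).take i).count D ≤ ((steps w).take i).count U := by
  have hwhole : ∀ s, (steps w).count s = ((steps w).take n).count s := fun s => by
    rw [List.take_of_length_le (length_steps w).le]
  simp only [IsDyckWord, IsLeftFactor, hwhole, count_U_take_steps, count_D_take_steps]
  constructor
  · rintro ⟨hlf, hbal⟩
    refine ⟨hbal, fun i => ?_⟩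
    rcases le_or_gt i n with h | h
    · exact hlf i h
    · rw [ups_of_le w h.le, downs_of_le w h.le, hbal]
  · rintro ⟨hbal, hlf⟩
    exact ⟨fun i _ => hlf i, hbal⟩

def toDyckWord {n : ℕ} (w : Fin n → Bool) (hw : IsDyckWord w) : DyckWord where
  toList := steps w
  count_U_eq_count_D := ((isDyckWord_iff_steps w).mp hw).1
  count_D_le_count_U := ((isDyckWord_iff_steps w).mp hw).2

theorem card_isDyckWord_two_mul (m : ℕ) :
    Nat.card {w : Fin (2 * m) → Bool // IsDyckWord w} = catalan m := by
  let f : {w : Fin (2 * m) → Bool // IsDyckWord w} → {p : DyckWord // p.semilength = m} :=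
    fun w => ⟨toDyckWord w.1 w.2, by
      have := (toDyckWord w.1 w.2).two_mul_semilength_eq_length.trans (length_steps w.1)
      omega⟩
  have hf : Function.Bijective f := by
    refine ⟨fun w v hwv => ?_, fun p => ?_⟩
    · have : steps w.1 = steps v.1 := congrArg (fun p => p.1.toList) hwv
      exact Subtype.ext <| List.ofFn_injective <|
        List.map_injective_iff.mpr stepOfBool_injective this
    · have hlen : p.1.toList.length = 2 * m := by
        rw [← p.1.two_mul_semilength_eq_length, p.2]
      let w : Fin (2 * m) → Bool := fun j =>
        decide (p.1.toList[(j : ℕ)]'(j.isLt.trans_eq hlen.symm) = U)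
      have hw : steps w = p.1.toList := by
        refine List.ext_getElem (by simp [hlen]) fun i h _ => ?_
        rcases (p.1.toList[i]).dichotomy with hs | hs <;> simp [steps, w, stepOfBool, hs]
      refine ⟨⟨w, (isDyckWord_iff_steps w).mpr ?_⟩, Subtype.ext (DyckWord.ext hw)⟩
      rw [hw]
      exact ⟨p.1.count_U_eq_count_D, p.1.count_D_le_count_U⟩
  rw [Nat.card_eq_of_bijective f hf, Nat.card_eq_fintype_card,
    DyckWord.card_dyckWord_semilength_eq_catalan]

theorem card_isDyckWord_two_mul_add_one (m : ℕ) :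
    Nat.card {w : Fin (2 * m + 1) → Bool // IsDyckWord w} = 0 := by
  refine Nat.card_eq_zero.mpr (Or.inl ⟨fun w => ?_⟩)
  have := (toDyckWord w.1 w.2).two_mul_semilength_eq_length.trans (length_steps w.1)
  omega

theorem choose_two_mul_add_one_add_catalan (m : ℕ) :
    (2 * m + 1).choose m + catalan m = 2 * (2 * m).choose m := by
  have hcat : (m + 1) * catalan m = (2 * m).choose m := by
    rw [succ_mul_catalan_eq_centralBinom, Nat.centralBinom_eq_two_mul_choose]
  have hpascal : (2 * m + 1) * (2 * m).choose m = (2 * m + 1).choose m * (m + 1) := by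
    rw [Nat.add_one_mul_choose_eq, Nat.choose_symm_half]
  refine Nat.eq_of_mul_eq_mul_left (show 0 < m + 1 by omega) ?_
  linarith

theorem choose_two_mul_add_two (m : ℕ) :
    (2 * m + 2).choose (m + 1) = 2 * (2 * m + 1).choose m := by
  rw [Nat.choose_succ_succ, Nat.choose_symm_half, ← two_mul]

theorem card_isLeftFactor (k : ℕ) :
    Nat.card {w : Fin k → Bool // IsLeftFactor w} = k.choose (k / 2) := by
  induction k with
  | zero =>
    show _ = 1
    rw [Nat.card_eq_one_iff_unique]
    exact ⟨⟨fun w v => Subtype.ext (Subsingleton.elim _ _)⟩,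
      ⟨⟨Fin.elim0, fun i _ => by simp [downs]⟩⟩⟩
  | succ k ih =>
    have hrec := card_isLeftFactor_succ_add_card_isDyckWord k
    rcases Nat.even_or_odd' k with ⟨m, rfl | rfl⟩
    · rw [card_isDyckWord_two_mul, ih, Nat.mul_div_cancel_left m two_pos] at hrec
      rw [show (2 * m + 1) / 2 = m by omega]
      linarith [choose_two_mul_add_one_add_catalan m]
    · rw [card_isDyckWord_two_mul_add_one, ih, show (2 * m + 1) / 2 = m by omega] at hrec
      rw [show (2 * m + 1 + 1) / 2 = m + 1 by omega, choose_two_mul_add_two]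
      linarith

/-- The number of left factors of Dyck paths of length `k` equals `C(k, k/2)` if `k` is
even, and `(1/2) * C(k+1, (k+1)/2)` if `k` is odd. -/
theorem stmt1 (k : ℕ) :
    Nat.card {w : Fin k → Bool // IsLeftFactor w} =
      if Even k then k.choose (k / 2) else (k + 1).choose ((k + 1) / 2) / 2 := by
  rw [card_isLeftFactor]
  split_ifs with hk
  · rfl
  · obtain ⟨m, rfl⟩ := Nat.not_even_iff_odd.mp hk
    rw [show (2 * m + 1 + 1) / 2 = m + 1 by omega, choose_two_mul_add_two,
      Nat.mul_div_cancel_left _ two_pos, show (2 * m + 1) / 2 = m by omega]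
end

section
/- The number of Dyck words of length 2n that are palindromes under the involution reversing the word and swapping up-steps with down-steps equals the number of left factors of Dyck paths of length n. -/
/-- The involution on words reversing the word and swapping up-steps with down-steps. -/
def revSwap {n : ℕ} (w : Fin n → Bool) : Fin n → Bool := fun j => ! w j.rev

/-
A revSwap-palindrome of length `2n` is determined by its first half `w`: it is `w` followed by
`revSwap w`. After the first half, the prefix of length `n + k` has the `n` steps of `w` and the
last `k` steps of `w` reversed and swapped, so its height equals the height of the prefix of `w`
of length `n - k`. Hence the palindrome is a Dyck word exactly when `w` is a left factor.
-/

open Finset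

def stepCount {n : ℕ} (w : Fin n → Bool) (i : ℕ) (b : Bool) : ℕ :=
  #{j : Fin n | (j : ℕ) < i ∧ w j = b}

section stepCount

variable {m n : ℕ}

theorem ups_eq_stepCount (w : Fin n → Bool) (i : ℕ) : ups w i = stepCount w i true := rfl

theorem downs_eq_stepCount (w : Fin n → Bool) (i : ℕ) : downs w i = stepCount w i false := rfl

theorem stepCount_eq_sum (w : Fin n → Bool) (i : ℕ) (b : Bool) :
    stepCount w i b = ∑ j : Fin n, if (j : ℕ) < i ∧ w j = b then 1 else 0 :=
  card_filter _ _

@[simp]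
theorem stepCount_zero (w : Fin n → Bool) (b : Bool) : stepCount w 0 b = 0 := by
  simp [stepCount]

theorem stepCount_of_le (w : Fin n → Bool) {i : ℕ} (hi : n ≤ i) (b : Bool) :
    stepCount w i b = stepCount w n b := by
  unfold stepCount
  congr 1
  exact filter_congr fun j _ => by simp only [j.isLt, j.isLt.trans_le hi, true_and]

theorem stepCount_append (w : Fin m → Bool) (v : Fin n → Bool) (i : ℕ) (b : Bool) :
    stepCount (Fin.append w v) i b = stepCount w i b + stepCount v (i - m) b := by
  simp only [stepCount_eq_sum, Fin.sum_univ_add, Fin.append_left, Fin.append_right,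
    Fin.val_castAdd, Fin.val_natAdd]
  congr 1
  exact Fintype.sum_congr _ _ fun j => by simp only [Nat.lt_sub_iff_add_lt']

theorem stepCount_append_of_le (w : Fin m → Bool) (v : Fin n → Bool) {i : ℕ} (hi : i ≤ m)
    (b : Bool) : stepCount (Fin.append w v) i b = stepCount w i b := by
  simp [stepCount_append, Nat.sub_eq_zero_of_le hi]

theorem stepCount_revSwap (w : Fin n → Bool) {k : ℕ} (hk : k ≤ n) (b : Bool) :
    stepCount (revSwap w) k b + stepCount w (n - k) (!b) = stepCount w n (!b) := by
  have hrev : stepCount (revSwap w) k b = ∑ j : Fin n, if n - k ≤ j ∧ w j = !b then 1 else 0 := by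
    rw [stepCount_eq_sum]
    refine Fintype.sum_equiv Fin.revPerm _ _ fun j => ?_
    simp only [revSwap, Fin.revPerm_apply, Fin.val_rev, Bool.not_eq_eq_eq_not]
    have := j.isLt
    congr 2
    exact propext (by omega)
  rw [hrev, stepCount_eq_sum, stepCount_eq_sum, ← sum_add_distrib]
  refine Fintype.sum_congr _ _ fun j => ?_
  have := j.isLt
  by_cases hb : w j = !b
  · simp only [hb, and_true]
    split_ifs <;> omega
  · simp only [hb, and_false, if_false]

end stepCount

section palindrome

variable {n : ℕ}

theorem revSwap_append_revSwap (w : Fin n → Bool) :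
    revSwap (Fin.append w (revSwap w)) = Fin.append w (revSwap w) := by
  funext j
  refine Fin.addCases (fun i => ?_) (fun i => ?_) j
  · simp [revSwap, Fin.append_rev]
  · simp only [revSwap, Fin.append_rev, Fin.cast_eq_self, Fin.append_right]
    rfl


theorem stepCount_append_revSwap_add (w : Fin n → Bool) {k : ℕ} (hk : k ≤ n) (b : Bool) :
    stepCount (Fin.append w (revSwap w)) (n + k) b + stepCount w (n - k) (!b) =
      stepCount w n b + stepCount w n (!b) := by
  rw [stepCount_append, stepCount_of_le w (Nat.le_add_right n k), Nat.add_sub_cancel_left,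
    add_assoc, stepCount_revSwap w hk]

theorem isDyckWord_append_revSwap_iff (w : Fin n → Bool) :
    IsDyckWord (Fin.append w (revSwap w)) ↔ IsLeftFactor w := by
  have second_half (k : ℕ) (hk : k ≤ n) :=
    And.intro (stepCount_append_revSwap_add w hk true) (stepCount_append_revSwap_add w hk false)
  simp only [Bool.not_true, Bool.not_false] at second_half
  simp only [IsDyckWord, IsLeftFactor, ups_eq_stepCount, downs_eq_stepCount]
  constructor
  · rintro ⟨h, -⟩ i hi
    simpa only [stepCount_append_of_le _ _ hi] using h i (by omega)
  · intro h
    refine ⟨fun i hi => ?_, ?_⟩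
    · rcases le_or_gt i n with hin | hni
      · simpa only [stepCount_append_of_le _ _ hin] using h i hin
      · obtain ⟨k, rfl⟩ : ∃ k, i = n + k := ⟨i - n, by omega⟩
        have := second_half k (by omega)
        have := h (n - k) (by omega)
        omega
    · have := second_half n le_rfl
      simp only [Nat.sub_self, stepCount_zero] at this
      omega

variable (n) in
def revSwapFixedEquiv : {u : Fin (n + n) → Bool // revSwap u = u} ≃ (Fin n → Bool) where
  toFun u j := u.1 (Fin.castAdd n j)
  invFun w := ⟨Fin.append w (revSwap w), revSwap_append_revSwap w⟩
  left_inv := by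
    rintro ⟨u, hu⟩
    ext j
    dsimp only
    refine Fin.addCases (fun i => ?_) (fun i => ?_) j
    · exact Fin.append_left _ _ i
    have hrev : (Fin.natAdd n i).rev = Fin.castAdd n i.rev := Fin.ext (by simp; omega)
    conv_rhs => rw [← hu]
    simp only [Fin.append_right, revSwap, hrev]
  right_inv w := funext fun j => Fin.append_left _ _ j

end palindrome

/-- The number of Dyck words of length `2n` that are palindromes under the
reverse-and-swap involution equals the number of left factors of Dyck paths of length `n`. -/
theorem stmt5 (n : ℕ) :
    Nat.card {w : Fin (2 * n) → Bool // IsDyckWord w ∧ revSwap w = w} =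
      Nat.card {w : Fin n → Bool // IsLeftFactor w} := by
  rw [two_mul]
  exact Nat.card_congr <| (Equiv.subtypeEquivRight fun _ => and_comm).trans <|
    (Equiv.subtypeSubtypeEquivSubtypeInter _ _).symm.trans <|
    ((revSwapFixedEquiv n).symm.subtypeEquiv fun w => (isDyckWord_append_revSwap_iff w).symm).symm
end

section
/- The peaks-and-valleys encoding is a bijection: for every n ≥ 1, Dyck paths of length 2n are in bijection with pairs of sequences (a_1,...,a_k), (b_1,...,b_{k-1}) of positive integers (for some k ≥ 1) satisfying b_i ≤ min(a_i, a_{i+1}) for all i, and sum a_i - sum b_j + (k-1) = n. -/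
/-! A path that starts with an up-step is uniquely a block `U^u D^d` followed by a path that is
empty or again starts with an up-step. The block contributes one peak, at its top, and, when
something follows, one valley, at its bottom. Hence a path is recovered block by block from its
peak and valley heights, and the conditions on `(a, b)` say exactly that every block is nonempty
and stays weakly above height `0`. With `b_0 = b_k = 1`, the `i`-th block is
`U^(a_i - b_{i-1} + 1) D^(a_i - b_i + 1)`, so the length is `2 (∑ a - ∑ b + (k - 1))`. -/

/-- The height of the path after its first `i` steps (`true` = up-step, `false` = down-step). -/
def heightAt (l : List Bool) (i : ℕ) : ℤ :=
  ((l.take i).count true : ℤ) - ((l.take i).count false : ℤ)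

/-- A Dyck word: all partial heights are nonnegative and the final height is `0`. -/
def IsDyckList (l : List Bool) : Prop :=
  (∀ i ≤ l.length, 0 ≤ heightAt l i) ∧ heightAt l l.length = 0

/-- The list of peak heights of a path, read left to right: a peak is an up-step
immediately followed by a down-step. -/
def peakHeights (l : List Bool) : List ℤ :=
  ((List.range (l.length - 1)).filter fun i =>
      l.getD i false && !(l.getD (i + 1) false)).map fun i => heightAt l (i + 1)

/-- The list of valley heights of a path, read left to right: a valley is a down-step
immediately followed by an up-step. -/
def valleyHeights (l : List Bool) : List ℤ :=
  ((List.range (l.length - 1)).filter fun i =>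
      !(l.getD i false) && l.getD (i + 1) false).map fun i => heightAt l (i + 1)

lemma heightAt_zero (l : List Bool) : heightAt l 0 = 0 := by simp [heightAt]

lemma heightAt_append_of_le {x : List Bool} (y : List Bool) {i : ℕ} (hi : i ≤ x.length) :
    heightAt (x ++ y) i = heightAt x i := by
  simp [heightAt, List.take_append_of_le_length hi]

lemma heightAt_append_length_add (x y : List Bool) (i : ℕ) :
    heightAt (x ++ y) (x.length + i) = heightAt x x.length + heightAt y i := by
  simp only [heightAt, List.take_append, List.take_length, Nat.add_sub_cancel_left,
    List.take_of_length_le (Nat.le_add_right x.length i), List.count_append]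
  push_cast
  ring

lemma heightAt_cons (c : Bool) (l : List Bool) (i : ℕ) :
    heightAt (c :: l) (i + 1) = heightAt l i + heightAt [c] 1 := by
  rw [add_comm i 1, add_comm (heightAt l i)]
  exact heightAt_append_length_add [c] l i

def patternHeights (q : Bool → Bool → Bool) (l : List Bool) : List ℤ :=
  ((List.range (l.length - 1)).filter fun i =>
      q (l.getD i false) (l.getD (i + 1) false)).map fun i => heightAt l (i + 1)

lemma patternHeights_singleton (q : Bool → Bool → Bool) (c : Bool) :
    patternHeights q [c] = [] := rfl

lemma patternHeights_cons (q : Bool → Bool → Bool) (c : Bool) {l : List Bool} {t : Bool}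
    (hl : l.head? = some t) :
    patternHeights q (c :: l) =
      (if q c t then [heightAt [c] 1] else []) ++
        (patternHeights q l).map (· + heightAt [c] 1) := by
  obtain ⟨l', rfl⟩ : ∃ l', l = t :: l' := by cases l <;> simp_all
  have hrange : List.range ((c :: t :: l').length - 1) =
      0 :: (List.range ((t :: l').length - 1)).map Nat.succ := by
    simp [List.range_succ_eq_map]
  unfold patternHeights
  rw [hrange, List.filter_cons, List.filter_map, List.map_map]
  have hjunction : heightAt (c :: t :: l') 1 = heightAt [c] 1 := by simp [heightAt]
  have hstep : ∀ i : ℕ,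
      heightAt (c :: t :: l') (i + 1 + 1) = heightAt (t :: l') (i + 1) + heightAt [c] 1 :=
    fun i => heightAt_cons c _ (i + 1)
  by_cases hq : q c t <;> simp [hq, Function.comp_def, hstep, hjunction]

lemma patternHeights_append (q : Bool → Bool → Bool) {x y : List Bool} {s t : Bool}
    (hx : x.getLast? = some s) (hy : y.head? = some t) :
    patternHeights q (x ++ y) = patternHeights q x ++
      ((if q s t then [heightAt x x.length] else []) ++
        (patternHeights q y).map (· + heightAt x x.length)) := by
  induction x with
  | nil => simp at hx
  | cons c x' ih =>
    rcases x' with _ | ⟨c', x''⟩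
    · obtain rfl : c = s := by simpa using hx
      simp [patternHeights_cons q c hy, patternHeights_singleton]
    · have hx' : (c' :: x'').getLast? = some s := by simpa [List.getLast?_cons] using hx
      have hH : heightAt (c :: c' :: x'') (c :: c' :: x'').length =
          heightAt (c' :: x'') (c' :: x'').length + heightAt [c] 1 :=
        heightAt_cons c _ _
      rw [List.cons_append, patternHeights_cons q c (t := c') rfl, ih hx',
        patternHeights_cons q c (t := c') rfl, hH]
      by_cases hq : q s t <;> simp [hq, Function.comp_def, add_assoc]

lemma patternHeights_replicate (q : Bool → Bool → Bool) {c : Bool} (hc : q c c = false)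
    (n : ℕ) : patternHeights q (List.replicate n c) = [] := by
  simp only [patternHeights, List.map_eq_nil_iff, List.filter_eq_nil_iff, List.mem_range,
    List.length_replicate]
  intro i hi
  simp [show i < n by omega, show i + 1 < n by omega, hc]

lemma peakHeights_eq_patternHeights (l : List Bool) :
    peakHeights l = patternHeights (fun s t => s && !t) l := rfl

lemma valleyHeights_eq_patternHeights (l : List Bool) :
    valleyHeights l = patternHeights (fun s t => !s && t) l := rfl

lemma peakHeights_append {x y : List Bool} (hx : x.getLast? = some false)
    (hy : y.head? = some true) :
    peakHeights (x ++ y) = peakHeights x ++ (peakHeights y).map (· + heightAt x x.length) := by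
  simp [peakHeights_eq_patternHeights, patternHeights_append _ hx hy]

lemma valleyHeights_append {x y : List Bool} (hx : x.getLast? = some false)
    (hy : y.head? = some true) :
    valleyHeights (x ++ y) = valleyHeights x ++
      heightAt x x.length :: (valleyHeights y).map (· + heightAt x x.length) := by
  simp [valleyHeights_eq_patternHeights, patternHeights_append _ hx hy]

def block (u d : ℕ) : List Bool := List.replicate u true ++ List.replicate d false

lemma head?_block {u : ℕ} (hu : 0 < u) (d : ℕ) : (block u d).head? = some true := by
  simp [block, List.head?_replicate, hu.ne']

lemma getLast?_block (u : ℕ) {d : ℕ} (hd : 0 < d) : (block u d).getLast? = some false := by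
  simp [block, List.getLast?_replicate, hd.ne']

lemma heightAt_block {u d i : ℕ} (hi : i ≤ u + d) :
    heightAt (block u d) i = min (i : ℤ) (2 * u - i) := by
  simp only [heightAt, block, List.take_append, List.take_replicate, List.length_replicate,
    List.count_append, List.count_replicate, BEq.rfl, ↓reduceIte, beq_true, beq_false,
    Bool.false_eq_true, Bool.not_true, add_zero, zero_add, Nat.cast_min]
  omega

lemma heightAt_block_length (u d : ℕ) :
    heightAt (block u d) (block u d).length = u - d := by
  rw [heightAt_block (by simp [block])]
  simp only [block, List.length_append, List.length_replicate, Nat.cast_add]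
  omega

lemma peakHeights_block {u d : ℕ} (hu : 0 < u) (hd : 0 < d) :
    peakHeights (block u d) = [(u : ℤ)] := by
  rw [peakHeights_eq_patternHeights, block, patternHeights_append _ (s := true) (t := false)
      (by simp [List.getLast?_replicate, hu.ne']) (by simp [List.head?_replicate, hd.ne'])]
  simp [patternHeights_replicate, heightAt, List.count_replicate]

lemma valleyHeights_block {u d : ℕ} (hu : 0 < u) (hd : 0 < d) :
    valleyHeights (block u d) = [] := by
  rw [valleyHeights_eq_patternHeights, block, patternHeights_append _ (s := true) (t := false)
      (by simp [List.getLast?_replicate, hu.ne']) (by simp [List.head?_replicate, hd.ne'])]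
  simp [patternHeights_replicate]

def IsDyckFrom (h : ℤ) (l : List Bool) : Prop :=
  (∀ i ≤ l.length, 0 ≤ h + heightAt l i) ∧ h + heightAt l l.length = 0

lemma isDyckList_iff_isDyckFrom_zero (l : List Bool) : IsDyckList l ↔ IsDyckFrom 0 l := by
  simp [IsDyckList, IsDyckFrom]

lemma isDyckFrom_nil (h : ℤ) : IsDyckFrom h [] ↔ h = 0 := by
  simp only [IsDyckFrom, List.length_nil, nonpos_iff_eq_zero, forall_eq, heightAt_zero,
    add_zero, and_iff_right_iff_imp]
  exact fun h0 => h0.ge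

lemma isDyckFrom_append (h : ℤ) (x y : List Bool) :
    IsDyckFrom h (x ++ y) ↔
      (∀ i ≤ x.length, 0 ≤ h + heightAt x i) ∧ IsDyckFrom (h + heightAt x x.length) y := by
  simp only [IsDyckFrom, List.length_append]
  constructor
  · rintro ⟨hbd, hend⟩
    refine ⟨fun i hi => ?_, fun j hj => ?_, ?_⟩
    · simpa [heightAt_append_of_le y hi] using hbd i (by omega)
    · simpa [heightAt_append_length_add, add_assoc] using hbd (x.length + j) (by omega)
    · simpa [heightAt_append_length_add, add_assoc] using hend
  · rintro ⟨hx, hy, hend⟩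
    refine ⟨fun i hi => ?_, by rwa [heightAt_append_length_add, ← add_assoc]⟩
    rcases le_or_gt i x.length with hi' | hi'
    · simpa [heightAt_append_of_le y hi'] using hx i hi'
    · obtain ⟨j, rfl⟩ := Nat.exists_eq_add_of_lt hi'
      rw [add_assoc, heightAt_append_length_add, ← add_assoc]
      exact hy _ (by omega)

lemma isDyckFrom_block_append {h : ℤ} (hh : 0 ≤ h) (u d : ℕ) (y : List Bool) :
    IsDyckFrom h (block u d ++ y) ↔ (d : ℤ) ≤ h + u ∧ IsDyckFrom (h + u - d) y := by
  rw [isDyckFrom_append, heightAt_block_length, ← add_sub_assoc]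
  refine and_congr_left fun _ => ⟨fun hbd => ?_, fun hdu i hi => ?_⟩
  · have := hbd (u + d) (by simp [block])
    rw [heightAt_block le_rfl] at this
    omega
  · simp only [block, List.length_append, List.length_replicate] at hi
    rw [heightAt_block hi]
    omega

lemma head?_eq_some_true_of_isDyckFrom_zero {l : List Bool} (hl : IsDyckFrom 0 l)
    (hne : l ≠ []) : l.head? = some true := by
  obtain ⟨c, t, rfl⟩ := List.exists_cons_of_ne_nil hne
  have := hl.1 1 (by simp)
  cases c <;> simp_all [heightAt]

lemma List.exists_replicate_append {α : Type*} [DecidableEq α] (c : α) (l : List α) :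
    ∃ k r, l = List.replicate k c ++ r ∧ r.head? ≠ some c := by
  induction l with
  | nil => exact ⟨0, [], by simp⟩
  | cons a t ih =>
    by_cases hac : a = c
    · obtain ⟨k, r, rfl, hr⟩ := ih
      exact ⟨k + 1, r, by simp [hac, List.replicate_succ], hr⟩
    · exact ⟨0, a :: t, by simp, by simpa using hac⟩

lemma exists_block_append {l : List Bool} (hl : l.head? = some true) :
    ∃ u d rest, 0 < u ∧ l = block u d ++ rest ∧
      (rest = [] ∨ 0 < d ∧ rest.head? = some true) := by
  obtain ⟨u, r, rfl, hr⟩ := List.exists_replicate_append true l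
  obtain ⟨d, rest, rfl, hrest⟩ := List.exists_replicate_append false r
  have hu : 0 < u := by
    rcases u with _ | u
    · simp_all
    · omega
  refine ⟨u, d, rest, hu, by simp [block], ?_⟩
  rcases rest with _ | ⟨c, rest⟩
  · exact Or.inl rfl
  · obtain rfl : c = true := by simpa using hrest
    rcases d with _ | d
    · simp_all
    · exact Or.inr ⟨by omega, rfl⟩

def decode : ℤ → List ℤ → List ℤ → List Bool
  | h, [a], [] => block (a - h).toNat a.toNat
  | h, a :: a' :: as, b :: bs =>
      block (a - h).toNat (a - b + 1).toNat ++ decode (b - 1) (a' :: as) bs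
  | _, _, _ => []

/-- `Admissible h a b`: `a` and `b` are the peak heights and the valley heights plus one of a
path from height `h` down to `0` that starts with an up-step and never goes below `0`. -/
inductive Admissible : ℤ → List ℤ → List ℤ → Prop
  | single {h a : ℤ} : 0 ≤ h → h < a → Admissible h [a] []
  | cons {h a a' b : ℤ} {as bs : List ℤ} : 0 ≤ h → h < a → b ≤ a →
      Admissible (b - 1) (a' :: as) bs → Admissible h (a :: a' :: as) (b :: bs)

namespace Admissible

variable {h : ℤ} {a b : List ℤ}

lemma nonneg (H : Admissible h a b) : 0 ≤ h := by
  cases H <;> assumption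

lemma ne_nil (H : Admissible h a b) : a ≠ [] := by
  cases H <;> simp

lemma head?_decode (H : Admissible h a b) : (decode h a b).head? = some true := by
  cases H with
  | single _ hlt => exact head?_block (by omega) _
  | cons _ hlt _ _ =>
    rw [decode, List.head?_append, head?_block (by omega)]
    rfl

lemma length_decode (H : Admissible h a b) :
    ((decode h a b).length : ℤ) = 2 * (a.sum - b.sum + b.length) - h := by
  induction H with
  | single hh hlt =>
    simp only [decode, block, List.length_append, List.length_replicate, List.sum_cons,
      List.sum_nil, List.length_nil]
    omega
  | cons hh hlt hba _ ih =>
    simp only [decode, block, List.length_append, List.length_replicate, List.sum_cons,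
      List.length_cons] at ih ⊢
    omega

lemma isDyckFrom_decode (H : Admissible h a b) : IsDyckFrom h (decode h a b) := by
  induction H with
  | single hh hlt =>
    rw [decode, ← List.append_nil (block _ _), isDyckFrom_block_append hh, isDyckFrom_nil]
    omega
  | @cons h a a' b as bs hh hlt hba H' ih =>
    have := H'.nonneg
    rw [decode, isDyckFrom_block_append hh]
    refine ⟨by omega, ?_⟩
    convert ih using 1
    omega

lemma peakHeights_decode (H : Admissible h a b) : peakHeights (decode h a b) = a.map (· - h) := by
  induction H with
  | single hh hlt =>
    rw [decode, peakHeights_block (by omega) (by omega), List.map_singleton]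
    congr 1
    omega
  | @cons h a a' b as bs hh hlt hba H' ih =>
    have hoff : ((a - h).toNat : ℤ) - (a - b + 1).toNat = b - 1 - h := by omega
    rw [decode, peakHeights_append (getLast?_block _ (by omega)) H'.head?_decode, ih,
      peakHeights_block (by omega) (by omega), heightAt_block_length, hoff, List.map_map,
      List.singleton_append, List.map_cons (a := a)]
    refine congrArg₂ _ (by omega) (List.map_congr_left fun x _ => ?_)
    simp only [Function.comp_apply]
    ring

lemma valleyHeights_decode (H : Admissible h a b) :
    valleyHeights (decode h a b) = b.map (· - 1 - h) := by
  induction H with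
  | single hh hlt => rw [decode, valleyHeights_block (by omega) (by omega), List.map_nil]
  | @cons h a a' b as bs hh hlt hba H' ih =>
    have hoff : ((a - h).toNat : ℤ) - (a - b + 1).toNat = b - 1 - h := by omega
    rw [decode, valleyHeights_append (getLast?_block _ (by omega)) H'.head?_decode, ih,
      valleyHeights_block (by omega) (by omega), heightAt_block_length, hoff, List.map_map,
      List.nil_append, List.map_cons (a := b)]
    refine congrArg₂ _ rfl (List.map_congr_left fun x _ => ?_)
    simp only [Function.comp_apply]
    ring

end Admissible

lemma admissible_iff {h : ℤ} (hh : 0 ≤ h) {a b : List ℤ} :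
    Admissible h a b ↔
      h < a.getD 0 0 ∧ b.length + 1 = a.length ∧ (∀ x ∈ a, 0 < x) ∧
        (∀ y ∈ b, 0 < y) ∧
        ∀ i < b.length, b.getD i 0 ≤ min (a.getD i 0) (a.getD (i + 1) 0) := by
  constructor
  · intro H
    induction H with
    | single hh hlt => exact ⟨hlt, rfl, by simpa using hh.trans_lt hlt, by simp, by simp⟩
    | cons hh hlt hba H' ih =>
      obtain ⟨hhead, hlen, hpa, hpb, hchain⟩ := ih H'.nonneg
      have := H'.nonneg
      simp only [List.getD_cons_zero] at hhead
      refine ⟨hlt, by simpa using hlen, ?_, ?_, ?_⟩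
      · simp only [List.mem_cons] at hpa ⊢
        grind
      · simp only [List.mem_cons] at hpb ⊢
        grind
      · rintro (_ | i) hi
        · simp only [List.getD_cons_zero, List.getD_cons_succ]
          exact le_min hba (by omega)
        · exact hchain i (by simpa using hi)
  · induction b generalizing a h with
    | nil =>
      rintro ⟨hhead, hlen, -⟩
      obtain ⟨x, rfl⟩ := List.length_eq_one_iff.mp hlen.symm
      exact .single hh hhead
    | cons b bs ih =>
      rintro ⟨hhead, hlen, hpa, hpb, hchain⟩
      obtain ⟨a₁, a₂, as, rfl⟩ : ∃ a₁ a₂ as, a = a₁ :: a₂ :: as := by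
        rcases a with _ | ⟨a₁, _ | ⟨a₂, as⟩⟩ <;> simp_all
      have hb := hpb b (by simp)
      have h0 := hchain 0 (by simp)
      simp only [List.getD_cons_zero, List.getD_cons_succ, le_min_iff] at h0 hhead
      refine .cons hh hhead h0.1 (ih (by omega) ⟨by simp; omega, by simpa using hlen,
        fun x hx => hpa x (by simp [hx]), fun y hy => hpb y (by simp [hy]),
        fun i hi => hchain (i + 1) (by simpa using hi)⟩)

lemma admissible_zero_iff {a b : List ℤ} :
    Admissible 0 a b ↔
      a ≠ [] ∧ b.length + 1 = a.length ∧ (∀ x ∈ a, 0 < x) ∧ (∀ y ∈ b, 0 < y) ∧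
        ∀ i < b.length, b.getD i 0 ≤ min (a.getD i 0) (a.getD (i + 1) 0) := by
  rw [admissible_iff le_rfl]
  refine and_congr_left fun ⟨_, hpa, _⟩ => ?_
  rcases a with _ | ⟨x, a⟩
  · simp
  · simpa using hpa x (by simp)

lemma map_add_peakHeights_block_append {u d : ℕ} (hu : 0 < u) (hd : 0 < d) {rest : List Bool}
    (hrest : rest.head? = some true) (h : ℤ) :
    (peakHeights (block u d ++ rest)).map (· + h) =
      (u + h) :: (peakHeights rest).map (· + (h + u - d)) := by
  rw [peakHeights_append (getLast?_block u hd) hrest, peakHeights_block hu hd,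
    heightAt_block_length]
  simp only [List.singleton_append, List.map_cons, List.map_map]
  refine congrArg₂ _ rfl (List.map_congr_left fun x _ => ?_)
  simp only [Function.comp_apply]
  ring

lemma map_add_valleyHeights_block_append {u d : ℕ} (hu : 0 < u) (hd : 0 < d) {rest : List Bool}
    (hrest : rest.head? = some true) (h : ℤ) :
    (valleyHeights (block u d ++ rest)).map (· + 1 + h) =
      (h + u - d + 1) :: (valleyHeights rest).map (· + 1 + (h + u - d)) := by
  rw [valleyHeights_append (getLast?_block u hd) hrest, valleyHeights_block hu hd,
    heightAt_block_length]
  simp only [List.nil_append, List.map_cons, List.map_map]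
  refine congrArg₂ _ (by ring) (List.map_congr_left fun x _ => ?_)
  simp only [Function.comp_apply]
  ring

theorem admissible_and_decode_of_isDyckFrom {h : ℤ} (hh : 0 ≤ h) {l : List Bool}
    (hl : l.head? = some true) (hD : IsDyckFrom h l) :
    Admissible h ((peakHeights l).map (· + h)) ((valleyHeights l).map (· + 1 + h)) ∧
      decode h ((peakHeights l).map (· + h)) ((valleyHeights l).map (· + 1 + h)) = l := by
  induction hN : l.length using Nat.strong_induction_on generalizing l h with
  | _ N ih =>
  obtain ⟨u, d, rest, hu, rfl, hrest⟩ := exists_block_append hl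
  obtain ⟨hdu, hDrest⟩ := (isDyckFrom_block_append hh u d rest).mp hD
  rcases hrest with rfl | ⟨hd, hrest⟩
  · rw [isDyckFrom_nil] at hDrest
    have hd : 0 < d := by omega
    rw [List.append_nil, peakHeights_block hu hd, valleyHeights_block hu hd]
    refine ⟨.single hh (by dsimp only; omega), ?_⟩
    simp only [List.map_cons, List.map_nil, decode]
    congr <;> omega
  · obtain ⟨IH, hdec⟩ :=
      ih rest.length (by simp [← hN, block]; omega) (by omega) hrest hDrest rfl
    rw [map_add_peakHeights_block_append hu hd hrest,
      map_add_valleyHeights_block_append hu hd hrest]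
    obtain ⟨a', as, hA⟩ := List.exists_cons_of_ne_nil IH.ne_nil
    rw [hA] at IH hdec ⊢
    refine ⟨.cons hh (by omega) (by omega) (by simpa using IH), ?_⟩
    rw [decode, add_sub_cancel_right (h + u - d), hdec]
    congr <;> omega

theorem admissible_and_decode_of_isDyckList {l : List Bool} (hD : IsDyckList l) (hne : l ≠ []) :
    Admissible 0 (peakHeights l) ((valleyHeights l).map (· + 1)) ∧
      decode 0 (peakHeights l) ((valleyHeights l).map (· + 1)) = l := by
  rw [isDyckList_iff_isDyckFrom_zero] at hD
  simpa using admissible_and_decode_of_isDyckFrom le_rfl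
    (head?_eq_some_true_of_isDyckFrom_zero hD hne) hD

/-- The peaks-and-valleys encoding is a bijection: the map sending a Dyck path of
length `2n` to its sequence of peak heights `(a_1, …, a_k)` and of (valley heights + 1)
`(b_1, …, b_{k-1})` is a bijection onto the set of pairs of sequences of positive
integers with `b_i ≤ min (a_i, a_{i+1})` and `∑ a_i - ∑ b_j + (k - 1) = n`. -/
theorem stmt16 (n : ℕ) (hn : 1 ≤ n) :
    Set.BijOn (fun l : List Bool => (peakHeights l, (valleyHeights l).map (· + 1)))
      {l : List Bool | IsDyckList l ∧ l.length = 2 * n}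
      {p : List ℤ × List ℤ |
        p.1 ≠ [] ∧ p.2.length + 1 = p.1.length ∧
        (∀ a ∈ p.1, 0 < a) ∧ (∀ b ∈ p.2, 0 < b) ∧
        (∀ i < p.2.length, p.2.getD i 0 ≤ min (p.1.getD i 0) (p.1.getD (i + 1) 0)) ∧
        p.1.sum - p.2.sum + p.2.length = n} := by
  have hencode : ∀ l : List Bool, IsDyckList l → l.length = 2 * n →
      Admissible 0 (peakHeights l) ((valleyHeights l).map (· + 1)) ∧
        decode 0 (peakHeights l) ((valleyHeights l).map (· + 1)) = l := fun l hD hlen =>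
    admissible_and_decode_of_isDyckList hD (by rintro rfl; simp at hlen; omega)
  refine Set.InvOn.bijOn (f' := fun p => decode 0 p.1 p.2)
    ⟨fun l hl => (hencode l hl.1 hl.2).2, fun p hp => ?_⟩ (fun l hl => ?_) (fun p hp => ?_)
  · obtain ⟨h₁, h₂, h₃, h₄, h₅, -⟩ := hp
    have H := admissible_zero_iff.mpr ⟨h₁, h₂, h₃, h₄, h₅⟩
    simp [H.peakHeights_decode, H.valleyHeights_decode, Function.comp_def]
  · obtain ⟨H, hdec⟩ := hencode l hl.1 hl.2
    obtain ⟨h₁, h₂, h₃, h₄, h₅⟩ := admissible_zero_iff.mp H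
    have hlen := H.length_decode
    rw [hdec, hl.2] at hlen
    refine ⟨h₁, h₂, h₃, h₄, h₅, ?_⟩
    dsimp only
    omega
  · obtain ⟨h₁, h₂, h₃, h₄, h₅, hsum⟩ := hp
    have H := admissible_zero_iff.mpr ⟨h₁, h₂, h₃, h₄, h₅⟩
    refine ⟨(isDyckList_iff_isDyckFrom_zero _).mpr H.isDyckFrom_decode, ?_⟩
    have hlen := H.length_decode
    rw [hsum] at hlen
    dsimp only
    omega
end
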